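/- arXiv:1601.03171 — 3 statements merged into one kernel-verified Lean document; each statement's English description precedes it below -/
import Mathlib

section
/- Let u_i(x) = (1/a_i)(1 − e^{−a_i x}) with a_i > 0 for i = 0,…,n, let λ_0 = 1 and λ_i > 0, and let X be a bounded random variable. If bounded random variables X̂_0,…,X̂_n satisfy X̂_0 + ⋯ + X̂_n = X and the first-order condition λ_i u_i'(w_i − X̂_i) = λ_j u_j'(w_j − X̂_j) almost surely for all i,j, then X̂_i = (a/a_i)(X − w) − (log λ_i)/a_i + w_i + (a/a_i)·Σ_{j=1}^n (log λ_j)/a_j for each i, where 1/a = Σ_{i=0}^n 1/a_i and w = Σ_{i=0}^n w_i. -/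
open MeasureTheory Filter Real Finset

/-
With exponential utilities, taking logarithms turns the first-order conditions into the linear
equations `log λ_j + a_j (X̂_j - w_j) = C` with one common (random) constant `C`. Hence
`X̂_j = w_j + (C - log λ_j) / a_j`; summing over `j` and using `∑ X̂_j = X` determines `C`,
and `log λ_0 = 0` removes the `j = 0` term.
-/

lemma log_mul_exp_of_pos {l : ℝ} (hl : 0 < l) (t : ℝ) : log (l * exp t) = log l + t := by
  rw [log_mul hl.ne' (exp_pos t).ne', log_exp]

section

variable {ι : Type*} {a w lam x : ι → ℝ}

lemma eq_of_log_add_mul_sub_eq (ha : ∀ j, 0 < a j) {C : ℝ}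
    (hC : ∀ j, log (lam j) + a j * (x j - w j) = C) (j : ι) :
    x j = w j - log (lam j) / a j + C * (1 / a j) := by
  have := hC j
  field_simp [(ha j).ne']
  linear_combination this

lemma eq_of_log_add_mul_sub_eq_const [Fintype ι] (ha : ∀ j, 0 < a j) {C : ℝ}
    (hC : ∀ j, log (lam j) + a j * (x j - w j) = C) (i : ι) :
    x i = ((∑ k, 1 / a k)⁻¹ / a i) * (∑ k, x k - ∑ k, w k)
      - log (lam i) / a i + w i
      + ((∑ k, 1 / a k)⁻¹ / a i) * ∑ k, log (lam k) / a k := by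
  have hx := eq_of_log_add_mul_sub_eq ha hC
  have hS : 0 < ∑ k, 1 / a k :=
    sum_pos (fun k _ => one_div_pos.2 (ha k)) ⟨i, mem_univ i⟩
  have hsum : ∑ k, x k = ∑ k, w k - ∑ k, log (lam k) / a k + C * ∑ k, 1 / a k := by
    rw [sum_congr rfl fun j _ => hx j, sum_add_distrib, sum_sub_distrib, ← mul_sum]
  have hC_eq : C = (∑ k, 1 / a k)⁻¹ * (∑ k, x k - ∑ k, w k + ∑ k, log (lam k) / a k) := by
    rw [eq_inv_mul_iff_mul_eq₀ hS.ne']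
    linear_combination -hsum
  rw [hx i, hC_eq]
  ring

end

theorem stmt3_general {Ω : Type*} [MeasurableSpace Ω] (μ : Measure Ω)
    (n : ℕ) (X : Ω → ℝ)
    (a : Fin (n + 1) → ℝ) (ha : ∀ i, 0 < a i)
    (w : Fin (n + 1) → ℝ)
    (lam : Fin (n + 1) → ℝ) (hlam0 : lam 0 = 1) (hlam : ∀ i, 0 < lam i)
    (Xh : Fin (n + 1) → Ω → ℝ)
    (hsum : ∀ ω, ∑ i, Xh i ω = X ω)
    (hFOC : ∀ i j, ∀ᵐ ω ∂μ,
      lam i * Real.exp (-(a i) * (w i - Xh i ω)) = lam j * Real.exp (-(a j) * (w j - Xh j ω))) :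
    ∀ i, ∀ᵐ ω ∂μ,
      Xh i ω = ((∑ k, 1 / a k)⁻¹ / a i) * (X ω - ∑ k, w k)
        - Real.log (lam i) / a i + w i
        + ((∑ k, 1 / a k)⁻¹ / a i) * ∑ j ∈ Finset.univ.erase 0, Real.log (lam j) / a j := by
  intro i
  filter_upwards [ae_all_iff.2 fun j => hFOC j 0] with ω hω
  have hlog : ∀ j, log (lam j) + a j * (Xh j ω - w j)
      = log (lam 0) + a 0 * (Xh 0 ω - w 0) := fun j => by
    have := congrArg log (hω j)
    rwa [log_mul_exp_of_pos (hlam j), log_mul_exp_of_pos (hlam 0), neg_mul_comm, neg_sub,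
      neg_mul_comm, neg_sub] at this
  have herase : ∑ j ∈ univ.erase 0, log (lam j) / a j = ∑ j, log (lam j) / a j :=
    sum_erase _ (by rw [hlam0, log_one, zero_div])
  rw [herase, ← hsum ω]
  exact eq_of_log_add_mul_sub_eq_const (x := fun j => Xh j ω) ha hlog i

theorem stmt3 {Ω : Type*} [MeasurableSpace Ω] (μ : Measure Ω) [IsProbabilityMeasure μ]
    (n : ℕ) (X : Ω → ℝ) (hXmeas : Measurable X) (MX : ℝ) (hMX : ∀ ω, |X ω| ≤ MX)
    (a : Fin (n + 1) → ℝ) (ha : ∀ i, 0 < a i)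
    (w : Fin (n + 1) → ℝ)
    (lam : Fin (n + 1) → ℝ) (hlam0 : lam 0 = 1) (hlam : ∀ i, 0 < lam i)
    (Xh : Fin (n + 1) → Ω → ℝ) (hXhmeas : ∀ i, Measurable (Xh i))
    (hXhbdd : ∀ i, ∃ M, ∀ ω, |Xh i ω| ≤ M)
    (hsum : ∀ ω, ∑ i, Xh i ω = X ω)
    (hFOC : ∀ i j, ∀ᵐ ω ∂μ,
      lam i * Real.exp (-(a i) * (w i - Xh i ω)) = lam j * Real.exp (-(a j) * (w j - Xh j ω))) :
    ∀ i, ∀ᵐ ω ∂μ,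
      Xh i ω = ((∑ k, 1 / a k)⁻¹ / a i) * (X ω - ∑ k, w k)
        - Real.log (lam i) / a i + w i
        + ((∑ k, 1 / a k)⁻¹ / a i) * ∑ j ∈ Finset.univ.erase 0, Real.log (lam j) / a j :=
  stmt3_general μ n X a ha w lam hlam0 hlam Xh hsum hFOC
end

section
/- Let X be bounded and a_i > 0, w_i ∈ ℝ for i = 0,…,n, with 1/a = Σ 1/a_i. Define X̂_i = (a/a_i)·X + c_i where the constants c_i satisfy Σ c_i = 0 (so Σ X̂_i = X). Then for any other decomposition X = Σ X_i into bounded random variables, Σ_i (1/a_i) E[e^{−a_i(w_i − X̂_i)} ] ≤ Σ_i (1/a_i) E[e^{−a_i(w_i − X_i)}] provided e^{a_i X̂_i}·e^{−a_i w_i} is a.s. equal to the same random variable Λ for all i; i.e., proportional sharing of X with equalized marginal utilities minimizes the aggregate expected exponential disutility. -/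
/-!
Write `f_i(x) = (1/a_i) e^{-a_i (w_i - x)}`; each `f_i` is convex with `f_i'(x) = e^{-a_i (w_i - x)}`.
Equal marginals `f_i'(X̂_i) = Λ` make the tangent-line inequalities
`f_i(X̂_i) + Λ (Y_i - X̂_i) ≤ f_i(Y_i)` sum, pointwise, to `∑ f_i(X̂_i) ≤ ∑ f_i(Y_i)`, because
`∑ Y_i = X = ∑ X̂_i`; integrate. Bounded shares keep every expectation finite.
-/

open MeasureTheory Real Finset

lemma one_div_mul_exp_add_mul_sub_le {a : ℝ} (ha : 0 < a) (w x y : ℝ) :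
    1 / a * exp (-a * (w - x)) + exp (-a * (w - x)) * (y - x) ≤ 1 / a * exp (-a * (w - y)) := by
  have hshift : exp (-a * (w - y)) = exp (-a * (w - x)) * exp (a * (y - x)) := by
    rw [← exp_add]; ring_nf
  have htangent : exp (-a * (w - x)) * (a * (y - x) + 1) ≤ exp (-a * (w - y)) := by
    rw [hshift]
    exact mul_le_mul_of_nonneg_left (add_one_le_exp _) (exp_pos _).le
  calc 1 / a * exp (-a * (w - x)) + exp (-a * (w - x)) * (y - x)
      = 1 / a * (exp (-a * (w - x)) * (a * (y - x) + 1)) := by field_simp; ring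
    _ ≤ 1 / a * exp (-a * (w - y)) := by gcongr

lemma sum_one_div_mul_exp_le_of_marginal_eq {ι : Type*} (s : Finset ι) {a w x y : ι → ℝ}
    (ha : ∀ i ∈ s, 0 < a i) {l : ℝ} (hx : ∀ i ∈ s, exp (-a i * (w i - x i)) = l)
    (hsum : ∑ i ∈ s, x i = ∑ i ∈ s, y i) :
    ∑ i ∈ s, 1 / a i * exp (-a i * (w i - x i)) ≤ ∑ i ∈ s, 1 / a i * exp (-a i * (w i - y i)) := by
  have htangent : ∀ i ∈ s, 1 / a i * exp (-a i * (w i - x i)) + l * (y i - x i) ≤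
      1 / a i * exp (-a i * (w i - y i)) := fun i hi => by
    simpa only [hx i hi] using one_div_mul_exp_add_mul_sub_le (ha i hi) (w i) (x i) (y i)
  have hzero : ∑ i ∈ s, l * (y i - x i) = 0 := by
    rw [← mul_sum, sum_sub_distrib, hsum, sub_self, mul_zero]
  simpa only [sum_add_distrib, hzero, add_zero] using sum_le_sum htangent

lemma sum_proportional_shares {ι : Type*} (s : Finset ι) {a c : ι → ℝ}
    (hS : ∑ i ∈ s, 1 / a i ≠ 0) (hc : ∑ i ∈ s, c i = 0) (x : ℝ) :
    ∑ i ∈ s, ((∑ j ∈ s, 1 / a j)⁻¹ / a i * x + c i) = x := by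
  rw [sum_add_distrib, hc, add_zero, ← sum_mul]
  simp_rw [div_eq_mul_one_div (∑ j ∈ s, 1 / a j)⁻¹, ← mul_sum, inv_mul_cancel₀ hS, one_mul]

lemma MeasureTheory.MemLp.integrable_exp {Ω : Type*} [MeasurableSpace Ω] {μ : Measure Ω}
    [IsFiniteMeasure μ] {Z : Ω → ℝ} (hZ : MemLp Z ⊤ μ) :
    Integrable (fun ω => exp (Z ω)) μ := by
  refine Integrable.of_bound (continuous_exp.comp_aestronglyMeasurable hZ.1)
    (exp (lpNorm Z ⊤ μ)) ?_
  filter_upwards [ae_le_lpNorm_exponent_top hZ] with ω hω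
  rw [norm_of_nonneg (exp_pos _).le]
  exact exp_le_exp.2 ((le_abs_self _).trans hω)

lemma sum_integral_exp_le_of_marginal_eq {Ω ι : Type*} [MeasurableSpace Ω] {μ : Measure Ω}
    [IsFiniteMeasure μ] [Fintype ι] {a w : ι → ℝ} (ha : ∀ i, 0 < a i) {Xh Y : ι → Ω → ℝ}
    (hXh : ∀ i, MemLp (Xh i) ⊤ μ) (hY : ∀ i, MemLp (Y i) ⊤ μ)
    (hsum : ∀ ω, ∑ i, Xh i ω = ∑ i, Y i ω) {Λ : Ω → ℝ}
    (hΛ : ∀ᵐ ω ∂μ, ∀ i, exp (-a i * (w i - Xh i ω)) = Λ ω) :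
    ∑ i, 1 / a i * ∫ ω, exp (-a i * (w i - Xh i ω)) ∂μ ≤
      ∑ i, 1 / a i * ∫ ω, exp (-a i * (w i - Y i ω)) ∂μ := by
  have hint : ∀ Z : ι → Ω → ℝ, (∀ i, MemLp (Z i) ⊤ μ) → ∀ i ∈ univ,
      Integrable (fun ω => 1 / a i * exp (-a i * (w i - Z i ω))) μ := fun Z hZ i _ =>
    (((memLp_top_const _).sub (hZ i)).const_mul (-a i)).integrable_exp.const_mul _
  simp only [← integral_const_mul, ← integral_finsetSum _ (hint _ hXh),
    ← integral_finsetSum _ (hint _ hY)]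
  refine integral_mono_ae (integrable_finsetSum _ (hint _ hXh))
    (integrable_finsetSum _ (hint _ hY)) ?_
  filter_upwards [hΛ] with ω hω
  exact sum_one_div_mul_exp_le_of_marginal_eq univ (fun i _ => ha i) (fun i _ => hω i) (hsum ω)

theorem stmt11_general {Ω : Type*} [MeasurableSpace Ω] (μ : Measure Ω) [IsProbabilityMeasure μ]
    (n : ℕ) (X : Ω → ℝ)
    (a : Fin (n + 1) → ℝ) (ha : ∀ i, 0 < a i)
    (w : Fin (n + 1) → ℝ)
    (A : ℝ) (hA : A = (∑ i, 1 / a i)⁻¹)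
    (c : Fin (n + 1) → ℝ) (hc : ∑ i, c i = 0)
    (Xh : Fin (n + 1) → Ω → ℝ)
    (hXh : ∀ i ω, Xh i ω = (A / a i) * X ω + c i)
    (Λ : Ω → ℝ)
    (hΛ : ∀ i, ∀ᵐ ω ∂μ, Real.exp (a i * Xh i ω) * Real.exp (-(a i) * w i) = Λ ω) :
    ∀ Y : Fin (n + 1) → Ω → ℝ, (∀ i, Measurable (Y i)) →
      (∀ i, ∃ M, ∀ ω, |Y i ω| ≤ M) → (∀ ω, ∑ i, Y i ω = X ω) →
      ∑ i, (1 / a i) * ∫ ω, Real.exp (-(a i) * (w i - Xh i ω)) ∂μ ≤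
        ∑ i, (1 / a i) * ∫ ω, Real.exp (-(a i) * (w i - Y i ω)) ∂μ := by
  intro Y hYm hYb hYsum
  have hYL : ∀ i, MemLp (Y i) ⊤ μ := fun i =>
    let ⟨M, hM⟩ := hYb i
    memLp_top_of_bound (hYm i).aestronglyMeasurable M (ae_of_all _ hM)
  have hXhL : ∀ i, MemLp (Xh i) ⊤ μ := fun i => by
    rw [funext (hXh i), ← funext hYsum]
    exact ((memLp_finsetSum _ fun j _ => hYL j).const_mul _).add (memLp_top_const _)
  have hS : ∑ i, 1 / a i ≠ 0 := (sum_pos (fun i _ => one_div_pos.2 (ha i)) univ_nonempty).ne'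
  have hXhsum : ∀ ω, ∑ i, Xh i ω = ∑ i, Y i ω := fun ω => by
    simp only [hXh, hA, hYsum, sum_proportional_shares univ hS hc]
  have hmarg : ∀ᵐ ω ∂μ, ∀ i, exp (-a i * (w i - Xh i ω)) = Λ ω := by
    filter_upwards [ae_all_iff.2 hΛ] with ω hω i
    rw [← hω i, ← exp_add]
    ring_nf
  exact sum_integral_exp_le_of_marginal_eq ha hXhL hYL hXhsum hmarg

theorem stmt11 {Ω : Type*} [MeasurableSpace Ω] (μ : Measure Ω) [IsProbabilityMeasure μ]
    (n : ℕ) (X : Ω → ℝ) (hXmeas : Measurable X) (MX : ℝ) (hMX : ∀ ω, |X ω| ≤ MX)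
    (a : Fin (n + 1) → ℝ) (ha : ∀ i, 0 < a i)
    (w : Fin (n + 1) → ℝ)
    (A : ℝ) (hA : A = (∑ i, 1 / a i)⁻¹)
    (c : Fin (n + 1) → ℝ) (hc : ∑ i, c i = 0)
    (Xh : Fin (n + 1) → Ω → ℝ)
    (hXh : ∀ i ω, Xh i ω = (A / a i) * X ω + c i)
    (Λ : Ω → ℝ)
    (hΛ : ∀ i, ∀ᵐ ω ∂μ, Real.exp (a i * Xh i ω) * Real.exp (-(a i) * w i) = Λ ω) :
    ∀ Y : Fin (n + 1) → Ω → ℝ, (∀ i, Measurable (Y i)) →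
      (∀ i, ∃ M, ∀ ω, |Y i ω| ≤ M) → (∀ ω, ∑ i, Y i ω = X ω) →
      ∑ i, (1 / a i) * ∫ ω, Real.exp (-(a i) * (w i - Xh i ω)) ∂μ ≤
        ∑ i, (1 / a i) * ∫ ω, Real.exp (-(a i) * (w i - Y i ω)) ∂μ :=
  stmt11_general μ n X a ha w A hA c hc Xh hXh Λ hΛ
end

section
/- Let X be a bounded random variable with a = a(n) = 1/(1/a_0 + n/a_1) for fixed a_0, a_1 > 0. Then E[u_0(w_0 − X̂_0^{(n)})] → u_0(w_0 − E[X]) as n → ∞, where X̂_0^{(n)} = (a/a_0)X + (1/a − 1/a_0)·log E[e^{aX}] and u_0(x) = (1/a_0)(1 − e^{−a_0 x}). -/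
/-!
Writing `K = cgf X μ` for the cumulant generating function, the certainty equivalent of
`X̂₀ = (a/a₀) X + (1/a - 1/a₀) K(a)` under the exponential utility `u₀` is exactly `K(a)/a`:
the factor `exp (a X - K(a))` left inside the expectation integrates to `1`. Hence
`E[u₀(w₀ - X̂₀)] = u₀(w₀ - K(a)/a)`. Since `X` is bounded, `K` is differentiable at `0` with
`K(0) = 0` and `K'(0) = E[X]`, so `K(a)/a → E[X]` as `a → 0⁺`, and `a(n) → 0⁺`.
-/

open MeasureTheory Filter Real ProbabilityTheory Topology

namespace ProbabilityTheory

variable {Ω : Type*} [MeasurableSpace Ω] {μ : Measure Ω} {X : Ω → ℝ}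

lemma integrable_exp_mul_of_abs_le_const [IsFiniteMeasure μ] (hX : AEMeasurable X μ) {M : ℝ}
    (hM : ∀ᵐ ω ∂μ, |X ω| ≤ M) (t : ℝ) : Integrable (fun ω ↦ exp (t * X ω)) μ := by
  refine (integrable_const (exp (|t| * M))).mono'
    (measurable_exp.comp_aemeasurable (hX.const_mul t)).aestronglyMeasurable ?_
  filter_upwards [hM] with ω hMω
  rw [norm_of_nonneg (exp_pos _).le, exp_le_exp]
  calc t * X ω ≤ |t * X ω| := le_abs_self _
    _ = |t| * |X ω| := abs_mul _ _
    _ ≤ |t| * M := mul_le_mul_of_nonneg_left hMω (abs_nonneg t)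

lemma integral_exp_mul_sub_cgf [IsProbabilityMeasure μ] {t : ℝ}
    (h : Integrable (fun ω ↦ exp (t * X ω)) μ) : ∫ ω, exp (t * X ω - cgf X μ t) ∂μ = 1 := by
  simp_rw [exp_sub]
  rw [integral_div, exp_cgf h]
  exact div_self (mgf_pos h).ne'

lemma integral_expUtility_cgf_shift [IsProbabilityMeasure μ] {c t : ℝ} (hc : c ≠ 0)
    (ht : t ≠ 0) (h : Integrable (fun ω ↦ exp (t * X ω)) μ) (w : ℝ) :
    ∫ ω, 1 / c * (1 - exp (-c * (w - (t / c * X ω + (1 / t - 1 / c) * cgf X μ t)))) ∂μ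
      = 1 / c * (1 - exp (-c * (w - cgf X μ t / t))) := by
  have hsplit : ∀ ω, -c * (w - (t / c * X ω + (1 / t - 1 / c) * cgf X μ t))
      = -c * (w - cgf X μ t / t) + (t * X ω - cgf X μ t) := fun ω ↦ by
    field_simp
    ring
  have hint : Integrable (fun ω ↦ exp (t * X ω - cgf X μ t)) μ := by
    simpa only [exp_sub] using h.div_const _
  simp_rw [hsplit, exp_add]
  rw [integral_const_mul, integral_sub (integrable_const 1) (hint.const_mul _), integral_const,
    integral_const_mul, integral_exp_mul_sub_cgf h, probReal_univ, one_smul, mul_one]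

lemma tendsto_cgf_div_nhdsNE_zero [IsProbabilityMeasure μ]
    (h : 0 ∈ interior (integrableExpSet X μ)) :
    Tendsto (fun t ↦ cgf X μ t / t) (𝓝[≠] 0) (𝓝 μ[X]) := by
  have hderiv : HasDerivAt (cgf X μ) μ[X] 0 := by
    simpa [deriv_cgf_zero h] using (analyticAt_cgf h).differentiableAt.hasDerivAt
  simpa [cgf_zero, div_eq_inv_mul] using hderiv.tendsto_slope_zero

end ProbabilityTheory

lemma tendsto_inv_add_natCast_div_nhdsGT_zero (c : ℝ) {b : ℝ} (hb : 0 < b) :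
    Tendsto (fun n : ℕ ↦ (c + n / b)⁻¹) atTop (𝓝[>] 0) :=
  tendsto_inv_atTop_nhdsGT_zero.comp <|
    tendsto_atTop_add_const_left _ _ (tendsto_natCast_atTop_atTop.atTop_div_const hb)

theorem stmt13 {Ω : Type*} [MeasurableSpace Ω] (μ : Measure Ω) [IsProbabilityMeasure μ]
    (X : Ω → ℝ) (hXmeas : Measurable X) (M : ℝ) (hM : ∀ ω, |X ω| ≤ M)
    (a₀ a₁ : ℝ) (ha₀ : 0 < a₀) (ha₁ : 0 < a₁) (w₀ : ℝ)
    (a : ℕ → ℝ) (ha : ∀ n, a n = (1 / a₀ + n / a₁)⁻¹)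
    (u₀ : ℝ → ℝ) (hu₀ : ∀ x, u₀ x = (1 / a₀) * (1 - Real.exp (-(a₀) * x)))
    (Xh₀ : ℕ → Ω → ℝ)
    (hXh₀ : ∀ n ω, Xh₀ n ω = (a n / a₀) * X ω
      + (1 / a n - 1 / a₀) * Real.log (∫ ω', Real.exp (a n * X ω') ∂μ)) :
    Tendsto (fun n => ∫ ω, u₀ (w₀ - Xh₀ n ω) ∂μ) atTop
      (nhds (u₀ (w₀ - ∫ ω, X ω ∂μ))) := by
  have hu₀' : u₀ = fun x ↦ 1 / a₀ * (1 - exp (-a₀ * x)) := funext hu₀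
  have hint := integrable_exp_mul_of_abs_le_const hXmeas.aemeasurable (ae_of_all μ hM)
  have ha_lim : Tendsto a atTop (𝓝[>] 0) := by
    simpa only [← ha] using tendsto_inv_add_natCast_div_nhdsGT_zero (1 / a₀) ha₁
  have hEU : ∀ n, ∫ ω, u₀ (w₀ - Xh₀ n ω) ∂μ = u₀ (w₀ - cgf X μ (a n) / a n) := fun n ↦ by
    have ha_pos : 0 < a n := by rw [ha n]; positivity
    simp only [hXh₀, hu₀']
    exact integral_expUtility_cgf_shift ha₀.ne' ha_pos.ne' (hint _) w₀
  have h0 : 0 ∈ interior (integrableExpSet X μ) := by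
    simp [Set.eq_univ_of_forall (s := integrableExpSet X μ) hint]
  have hu_cont : Continuous u₀ := hu₀' ▸ by fun_prop
  simp only [hEU]
  exact (hu_cont.tendsto _).comp
    (tendsto_const_nhds.sub ((tendsto_cgf_div_nhdsNE_zero h0).comp
      (ha_lim.mono_right (nhdsGT_le_nhdsNE 0))))
end
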